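/- For every invertible real 2×2 matrix P, every a > 0, θ ∈ [0, 2π) and b ∈ ℝ², the mean transformed frequency of the geometrically anisotropic coherent state satisfies (2/r) · (1/(2π)²) ∫_{ℝ²} ‖Qᵀω‖ |V_{ξ}(ω)|² d²ω = C₃ a^{−1/γ}, where C₃ = Γ(r + 1/γ + 1)/(2^{1/γ} Γ(r+1)). -/

import Mathlib

/- Geometric anisotropy: common definitions -/
noncomputable section
open MeasureTheory Real Set

/-- Euclidean norm of a vector in ℝ². -/
def nrm (v : Fin 2 → ℝ) : ℝ := Real.sqrt (v 0 ^ 2 + v 1 ^ 2)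

/-- Euclidean inner product on ℝ². -/
def dot2 (v w : Fin 2 → ℝ) : ℝ := v 0 * w 0 + v 1 * w 1

/-- Rotation matrix through angle θ. -/
def rot (θ : ℝ) : Matrix (Fin 2) (Fin 2) ℝ :=
  !![Real.cos θ, -Real.sin θ; Real.sin θ, Real.cos θ]

/-- 1-D Morse profile, with r = (2β+1)/γ. -/
def V1D (β γ : ℝ) (ω : ℝ) : ℝ :=
  if 0 < ω then
    (2 ^ (((2 * β + 1) / γ + 1) / 2) * Real.sqrt (π * γ) /
      Real.sqrt (Real.Gamma ((2 * β + 1) / γ))) * ω ^ β * Real.exp (-(ω ^ γ))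
  else 0

/-- Radial fiducial vector V_r(ν) = ‖ν‖^{(γ−1)/2} V₁D(‖ν‖). -/
def Vrad (β γ : ℝ) (ν : Fin 2 → ℝ) : ℝ := nrm ν ^ ((γ - 1) / 2) * V1D β γ (nrm ν)

/-- Geometrically anisotropic coherent state in the frequency domain:
`V_ξ(ω) = a^{1/γ} |det P|^{−1/2} V_r(a^{1/γ} r_{−θ} Qᵀω) exp(−i (b·Qᵀω) ‖Qᵀω‖^{γ−1})`
with `Q = P⁻¹`. -/
def cstate (β γ : ℝ) (P : Matrix (Fin 2) (Fin 2) ℝ) (a θ : ℝ) (b ω : Fin 2 → ℝ) : ℂ :=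
  ((a ^ (1 / γ) * |P.det| ^ (-(1 : ℝ) / 2) *
      Vrad β γ (fun i => a ^ (1 / γ) * (rot (-θ)).mulVec (P⁻¹.transpose.mulVec ω) i) : ℝ) : ℂ) *
    Complex.exp (-Complex.I *
      ((dot2 b (P⁻¹.transpose.mulVec ω) * nrm (P⁻¹.transpose.mulVec ω) ^ (γ - 1) : ℝ) : ℂ))

/- ### Auxiliary lemmas -/

lemma nrm_smul (c : ℝ) (v : Fin 2 → ℝ) : nrm (c • v) = |c| * nrm v := by
  simp only [nrm, Pi.smul_apply, smul_eq_mul, mul_pow]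
  rw [← mul_add, Real.sqrt_mul (sq_nonneg c), Real.sqrt_sq_eq_abs]

lemma nrm_rot (φ : ℝ) (v : Fin 2 → ℝ) : nrm ((rot φ).mulVec v) = nrm v := by
  have h := Real.sin_sq_add_cos_sq φ
  have e0 : (rot φ).mulVec v 0 = Real.cos φ * v 0 - Real.sin φ * v 1 := by
    simp [rot, Matrix.mulVec, dotProduct, Fin.sum_univ_two]; ring
  have e1 : (rot φ).mulVec v 1 = Real.sin φ * v 0 + Real.cos φ * v 1 := by
    simp [rot, Matrix.mulVec, dotProduct, Fin.sum_univ_two]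
  rw [nrm, nrm, e0, e1]
  congr 1
  nlinarith [h]

lemma det_rot (φ : ℝ) : (rot φ).det = 1 := by
  simp [rot, Matrix.det_fin_two_of]
  nlinarith [Real.sin_sq_add_cos_sq φ]

lemma integral_comp_mulVec (M : Matrix (Fin 2) (Fin 2) ℝ) (hM : M.det ≠ 0)
    (f : (Fin 2 → ℝ) → ℝ) (hf : Measurable f) :
    ∫ ω : Fin 2 → ℝ, f (M.mulVec ω) = |M.det|⁻¹ * ∫ v : Fin 2 → ℝ, f v := by
  have h := Real.map_matrix_volume_pi_eq_smul_volume_pi hM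
  have hcont : Continuous (Matrix.toLin' M) := (Matrix.toLin' M).continuous_of_finiteDimensional
  have : ∫ ω : Fin 2 → ℝ, f (M.mulVec ω) = ∫ y, f y ∂(Measure.map (Matrix.toLin' M) volume) := by
    rw [integral_map hcont.measurable.aemeasurable hf.aestronglyMeasurable]
    simp [Matrix.toLin'_apply]
  rw [this, h, integral_smul_measure, ENNReal.toReal_ofReal (by positivity), abs_inv,
    smul_eq_mul]

lemma measurable_V1D (β γ : ℝ) : Measurable (V1D β γ) := by
  unfold V1D
  apply Measurable.ite (measurableSet_lt measurable_const measurable_id) ?_ measurable_const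
  fun_prop

lemma continuous_nrm : Continuous nrm := by
  unfold nrm; fun_prop

lemma measurable_g (β γ : ℝ) : Measurable (fun v => nrm v * (Vrad β γ v) ^ 2) := by
  unfold Vrad
  have hr : Measurable (fun x : ℝ => x ^ ((γ - 1) / 2)) := by fun_prop
  have h1 : Measurable (fun v : Fin 2 → ℝ => nrm v ^ ((γ - 1) / 2)) :=
    hr.comp continuous_nrm.measurable
  exact (continuous_nrm.measurable).mul
    ((h1.mul ((measurable_V1D β γ).comp continuous_nrm.measurable)).pow_const 2)

/-- The key 2-D radial integral. -/
lemma integral_g (β γ : ℝ) (hβ : 0 < β) (hγ : 0 < γ) :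
    ∫ v : Fin 2 → ℝ, nrm v * (Vrad β γ v) ^ 2
      = (2 * π) * ((2 ^ ((2 * β + 1) / γ + 1) * (π * γ) / Real.Gamma ((2 * β + 1) / γ)) *
          (2 ^ (-(2 * β + γ + 1 + 1) / γ) * (1 / γ) *
            Real.Gamma ((2 * β + γ + 1 + 1) / γ))) := by
  set g : (Fin 2 → ℝ) → ℝ := fun v => nrm v * (Vrad β γ v) ^ 2 with hg
  have hr0 : 0 < (2 * β + 1) / γ := by positivity
  have hΓ : 0 < Real.Gamma ((2 * β + 1) / γ) := Real.Gamma_pos_of_pos hr0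
  -- step 1: to ℝ × ℝ
  have step1 : (∫ v : Fin 2 → ℝ, g v) = ∫ p : ℝ × ℝ, g ![p.1, p.2] := by
    rw [← (volume_preserving_finTwoArrow ℝ).integral_comp
      MeasurableEquiv.finTwoArrow.measurableEmbedding (fun p : ℝ × ℝ => g ![p.1, p.2])]
    congr 1
  -- step 2: polar coordinates
  have step2 : (∫ p : ℝ × ℝ, g ![p.1, p.2])
      = ∫ p in polarCoord.target, p.1 • g ![(polarCoord.symm p).1, (polarCoord.symm p).2] :=
    (integral_comp_polarCoord_symm (fun p : ℝ × ℝ => g ![p.1, p.2])).symm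
  -- the radial profile
  set h : ℝ → ℝ := fun ρ => ρ * (ρ * (ρ ^ ((γ - 1) / 2) * V1D β γ ρ) ^ 2) with hh
  have step3 : (∫ p in polarCoord.target, p.1 • g ![(polarCoord.symm p).1, (polarCoord.symm p).2])
      = ∫ p in (Ioi (0:ℝ)) ×ˢ (Ioo (-π) π), h p.1 * (1 : ℝ) := by
    rw [polarCoord_target]
    refine setIntegral_congr_fun (measurableSet_Ioi.prod measurableSet_Ioo) (fun p hp => ?_)
    have hp1 : 0 < p.1 := hp.1
    have hnp : nrm ![(polarCoord.symm p).1, (polarCoord.symm p).2] = p.1 := by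
      simp only [nrm, polarCoord_symm_apply, Matrix.cons_val_zero, Matrix.cons_val_one,
        Matrix.head_cons]
      rw [show (p.1 * Real.cos p.2) ^ 2 + (p.1 * Real.sin p.2) ^ 2 = p.1 ^ 2 by
        nlinarith [Real.sin_sq_add_cos_sq p.2]]
      exact Real.sqrt_sq hp1.le
    simp only [hg, Vrad, hnp, smul_eq_mul, hh, mul_one]
  have step4 : (∫ p in (Ioi (0:ℝ)) ×ˢ (Ioo (-π) π), h p.1 * (1:ℝ))
      = (∫ ρ in Ioi (0:ℝ), h ρ) * ∫ φ in Ioo (-π) π, (1:ℝ) := by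
    exact setIntegral_prod_mul h (fun _ => (1:ℝ)) _ _
  have step5 : (∫ φ in Ioo (-π) π, (1:ℝ)) = 2 * π := by
    rw [setIntegral_const, Real.volume_real_Ioo, smul_eq_mul, mul_one,
      max_eq_left (by linarith [Real.pi_pos])]
    ring
  -- the radial integral
  have step6 : (∫ ρ in Ioi (0:ℝ), h ρ)
      = (2 ^ ((2 * β + 1) / γ + 1) * (π * γ) / Real.Gamma ((2 * β + 1) / γ)) *
          (2 ^ (-(2 * β + γ + 1 + 1) / γ) * (1 / γ) * Real.Gamma ((2 * β + γ + 1 + 1) / γ)) := by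
    have hA2 : ((2:ℝ) ^ (((2 * β + 1) / γ + 1) / 2) * Real.sqrt (π * γ) /
        Real.sqrt (Real.Gamma ((2 * β + 1) / γ))) ^ 2
        = 2 ^ ((2 * β + 1) / γ + 1) * (π * γ) / Real.Gamma ((2 * β + 1) / γ) := by
      rw [div_pow, mul_pow, Real.sq_sqrt (by positivity), Real.sq_sqrt hΓ.le,
        ← Real.rpow_natCast ((2:ℝ) ^ (((2 * β + 1) / γ + 1) / 2)) 2,
        ← Real.rpow_mul (by norm_num)]
      norm_num
    have key : ∀ ρ ∈ Ioi (0:ℝ), h ρ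
        = (2 ^ ((2 * β + 1) / γ + 1) * (π * γ) / Real.Gamma ((2 * β + 1) / γ)) *
            (ρ ^ (2 * β + γ + 1) * Real.exp (-2 * ρ ^ γ)) := by
      intro ρ hρ
      have hx : (0:ℝ) < ρ := hρ
      rw [hh]
      simp only [V1D, if_pos hx]
      have h1 : (ρ ^ ((γ - 1) / 2)) ^ 2 = ρ ^ (γ - 1) := by
        rw [← Real.rpow_natCast (ρ ^ ((γ - 1) / 2)) 2, ← Real.rpow_mul hx.le]
        norm_num
      have h2 : (ρ ^ β) ^ 2 = ρ ^ (2 * β) := by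
        rw [← Real.rpow_natCast (ρ ^ β) 2, ← Real.rpow_mul hx.le]
        norm_num; ring_nf
      have h3 : (Real.exp (-(ρ ^ γ))) ^ 2 = Real.exp (-2 * ρ ^ γ) := by
        rw [sq, ← Real.exp_add]; congr 1; ring
      have h4 : ρ ^ (2 * β + γ + 1) = ρ ^ (2 * β) * ρ ^ (γ - 1) * (ρ * ρ) := by
        rw [show (2 * β + γ + 1) = (2 * β) + ((γ - 1) + 2) by ring, Real.rpow_add hx,
          Real.rpow_add hx, show ((2:ℝ) = ((2:ℕ):ℝ)) by norm_num, Real.rpow_natCast, sq]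
        ring
      rw [mul_pow, mul_pow, mul_pow, h1, h2, h3, hA2, h4]
      ring
    rw [setIntegral_congr_fun measurableSet_Ioi key, integral_const_mul,
      integral_rpow_mul_exp_neg_mul_rpow hγ (by nlinarith) (by norm_num : (0:ℝ) < 2)]
  rw [step1, step2, step3, step4, step5, step6]
  ring

/-- the mean transformed frequency of the geometrically anisotropic coherent
state satisfies `(2/r)·(1/(2π)²) ∫ ‖Qᵀω‖ |V_ξ(ω)|² d²ω = C₃ a^{−1/γ}`, where
`C₃ = Γ(r + 1/γ + 1)/(2^{1/γ} Γ(r+1))`. -/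
theorem coherent_state_mean_frequency (β γ : ℝ) (hβ : 0 < β) (hγ : 0 < γ)
    (r : ℝ) (hr : r = (2 * β + 1) / γ)
    (P : Matrix (Fin 2) (Fin 2) ℝ) (hP : IsUnit P.det)
    (a θ : ℝ) (ha : 0 < a) (hθ : θ ∈ Set.Ico 0 (2 * π)) (b : Fin 2 → ℝ)
    (C₃ : ℝ) (hC₃ : C₃ = Real.Gamma (r + 1 / γ + 1) / (2 ^ (1 / γ) * Real.Gamma (r + 1))) :
    (2 / r) * ((1 / (2 * π) ^ 2) *
        ∫ ω : Fin 2 → ℝ, nrm (P⁻¹.transpose.mulVec ω) * ‖cstate β γ P a θ b ω‖ ^ 2)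
      = C₃ * a ^ (-(1 / γ)) := by
  have hγ' : γ ≠ 0 := hγ.ne'
  have hr0 : 0 < r := by rw [hr]; positivity
  have hdet : P.det ≠ 0 := by
    intro h; rw [h] at hP; exact (not_isUnit_zero hP : False)
  set c : ℝ := a ^ (1 / γ) with hc
  have hcpos : 0 < c := Real.rpow_pos_of_pos ha _
  set M : Matrix (Fin 2) (Fin 2) ℝ := rot (-θ) * P⁻¹.transpose with hMdef
  have hdetM : M.det = (P.det)⁻¹ := by
    rw [hMdef, Matrix.det_mul, det_rot, one_mul, Matrix.det_transpose, Matrix.det_nonsing_inv,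
      Ring.inverse_eq_inv']
  set M' : Matrix (Fin 2) (Fin 2) ℝ := c • M with hM'def
  have hdetM' : M'.det = c ^ 2 * (P.det)⁻¹ := by
    rw [hM'def, Matrix.det_smul, hdetM]; norm_num
  have hdetM'ne : M'.det ≠ 0 := by
    rw [hdetM']
    exact mul_ne_zero (by positivity) (inv_ne_zero hdet)
  have habs : |M'.det| = c ^ 2 * |P.det|⁻¹ := by
    rw [hdetM', abs_mul, abs_inv, abs_of_pos (by positivity : (0:ℝ) < c ^ 2)]
  set g : (Fin 2 → ℝ) → ℝ := fun v => nrm v * (Vrad β γ v) ^ 2 with hg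
  -- pointwise identity
  have hpt : ∀ ω : Fin 2 → ℝ, nrm (P⁻¹.transpose.mulVec ω) * ‖cstate β γ P a θ b ω‖ ^ 2
      = (c⁻¹ * (c ^ 2 * |P.det|⁻¹)) * g (M'.mulVec ω) := by
    intro ω
    have hMv : M'.mulVec ω = fun i => c * (rot (-θ)).mulVec (P⁻¹.transpose.mulVec ω) i := by
      funext i
      rw [hM'def, Matrix.smul_mulVec, hMdef, ← Matrix.mulVec_mulVec]
      rfl
    have hnrmM' : nrm (M'.mulVec ω) = c * nrm (P⁻¹.transpose.mulVec ω) := by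
      rw [hMv]
      have : (fun i => c * (rot (-θ)).mulVec (P⁻¹.transpose.mulVec ω) i)
          = c • ((rot (-θ)).mulVec (P⁻¹.transpose.mulVec ω)) := rfl
      rw [this, nrm_smul, nrm_rot, abs_of_pos hcpos]
    have hnorm : ‖cstate β γ P a θ b ω‖
        = |c * |P.det| ^ (-(1:ℝ) / 2) * Vrad β γ (M'.mulVec ω)| := by
      rw [cstate, hMv, norm_mul, Complex.norm_real]
      have : ‖Complex.exp (-Complex.I *
          ((dot2 b (P⁻¹.transpose.mulVec ω) *
            nrm (P⁻¹.transpose.mulVec ω) ^ (γ - 1) : ℝ) : ℂ))‖ = 1 := by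
        rw [Complex.norm_exp]
        simp
      rw [this, mul_one, Real.norm_eq_abs, hc]
    have hsq : ‖cstate β γ P a θ b ω‖ ^ 2
        = c ^ 2 * |P.det|⁻¹ * (Vrad β γ (M'.mulVec ω)) ^ 2 := by
      rw [hnorm, sq_abs]
      have hPd : ((|P.det| ^ (-(1:ℝ) / 2)) : ℝ) ^ 2 = |P.det|⁻¹ := by
        rw [← Real.rpow_natCast (|P.det| ^ (-(1:ℝ) / 2)) 2, ← Real.rpow_mul (abs_nonneg _)]
        norm_num
        rw [Real.rpow_neg_one]
      rw [mul_pow, mul_pow, hPd]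
    rw [hsq]
    have : nrm (P⁻¹.transpose.mulVec ω) = c⁻¹ * nrm (M'.mulVec ω) := by
      rw [hnrmM']; field_simp
    rw [this, hg]
    ring
  rw [integral_congr_ae (ae_of_all _ hpt), integral_const_mul,
    integral_comp_mulVec M' hdetM'ne g (measurable_g β γ), habs, integral_g β γ hβ hγ]
  -- now pure arithmetic
  have hΓpos : 0 < Real.Gamma r := Real.Gamma_pos_of_pos hr0
  have hΓ1 : Real.Gamma (r + 1) = r * Real.Gamma r := Real.Gamma_add_one hr0.ne'
  have hrg : (2 * β + 1) / γ = r := hr.symm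
  have hexp2 : (2 * β + γ + 1 + 1) / γ = r + 1 / γ + 1 := by
    rw [hr]; field_simp; ring
  have hpow : (2:ℝ) ^ (r + 1) * 2 ^ (-(2 * β + γ + 1 + 1) / γ)
      = (2 ^ (1 / γ) : ℝ)⁻¹ := by
    rw [← Real.rpow_add (by norm_num : (0:ℝ) < 2), ← Real.rpow_neg (by norm_num : (0:ℝ) ≤ 2)]
    congr 1
    rw [hr]
    field_simp
    ring
  have hanegc : a ^ (-(1 / γ)) = c⁻¹ := by
    rw [hc, ← Real.rpow_neg ha.le]
  have h2γpos : (0:ℝ) < 2 ^ (1 / γ) := Real.rpow_pos_of_pos (by norm_num) _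
  have h2r1pos : (0:ℝ) < 2 ^ (r + 1) := Real.rpow_pos_of_pos (by norm_num) _
  have hX : (2:ℝ) ^ (-(2 * β + γ + 1 + 1) / γ) = (2 ^ (1 / γ) : ℝ)⁻¹ / 2 ^ (r + 1) := by
    rw [eq_div_iff h2r1pos.ne', mul_comm]
    exact hpow
  rw [hC₃, hrg, hexp2, hΓ1, hanegc, hX]
  have hπ : (π:ℝ) ≠ 0 := Real.pi_ne_zero
  have hPd : |P.det| ≠ 0 := abs_ne_zero.mpr hdet
  field_simp
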